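/- arXiv:2011.02594 — 5 statements merged into one kernel-verified Lean document; each statement's English description precedes it below -/
import Mathlib

section
/- Let (X, 𝒜, μ) be a σ-finite measure space and let p and q be probability measures on X with densities f and g with respect to μ (both f and g nonnegative and μ-integrable with total integral 1). Then for every measurable function D : X → (0, 1), ∫ f·log(D) dμ + ∫ g·log(1 − D) dμ ≤ ∫_{ {f+g>0} } [ f·log(f/(f+g)) + g·log(g/(f+g)) ] dμ, and equality holds if and only if D = f/(f+g) μ-almost everywhere on the set {f + g > 0}. -/
open MeasureTheory Real

lemma opt_disc_key (a b t : ℝ) (ha : 0 ≤ a) (hb : 0 ≤ b) (hab : 0 < a + b)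
    (ht0 : 0 < t) (ht1 : t < 1) :
    a * log t + b * log (1 - t) ≤ a * log (a / (a + b)) + b * log (b / (a + b)) ∧
    (a * log t + b * log (1 - t) = a * log (a / (a + b)) + b * log (b / (a + b)) ↔
      t = a / (a + b)) := by
  have h1t : 0 < 1 - t := by linarith
  rcases eq_or_lt_of_le ha with ha0 | ha
  · -- a = 0
    have hb' : 0 < b := by linarith [ha0]
    have hrw : a * log (a / (a + b)) + b * log (b / (a + b)) = 0 := by
      rw [← ha0]; simp [div_self (by linarith : b ≠ 0)]
    have hlhs : a * log t + b * log (1 - t) < 0 := by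
      rw [← ha0]
      have : log (1 - t) < 0 := log_neg h1t (by linarith)
      nlinarith
    constructor
    · linarith
    · constructor
      · intro h; exfalso; linarith [hrw ▸ h]
      · intro h; exfalso; rw [← ha0] at h; simp at h; linarith [h ▸ ht0]
  rcases eq_or_lt_of_le hb with hb0 | hb
  · -- b = 0
    have hrw : a * log (a / (a + b)) + b * log (b / (a + b)) = 0 := by
      rw [← hb0]; simp [div_self (by linarith : a ≠ 0)]
    have hlhs : a * log t + b * log (1 - t) < 0 := by
      rw [← hb0]
      have : log t < 0 := log_neg ht0 ht1
      nlinarith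
    constructor
    · linarith
    · constructor
      · intro h; exfalso; linarith [hrw ▸ h]
      · intro h; exfalso; rw [← hb0] at h
        rw [add_zero, div_self (by linarith : a ≠ 0)] at h; linarith
  · -- a > 0, b > 0
    set s := a + b with hs
    have hu : 0 < s * t / a := by positivity
    have hv : 0 < s * (1 - t) / b := by positivity
    have hulog : log (s * t / a) ≤ s * t / a - 1 := log_le_sub_one_of_pos hu
    have hvlog : log (s * (1 - t) / b) ≤ s * (1 - t) / b - 1 := log_le_sub_one_of_pos hv
    -- rewrite differences
    have e1 : log (a / s) - log t = - log (s * t / a) := by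
      rw [log_div (by linarith) (by linarith), log_div (by positivity) (by linarith),
        log_mul (by linarith) (by linarith)]
      ring
    have e2 : log (b / s) - log (1 - t) = - log (s * (1 - t) / b) := by
      rw [log_div (by linarith) (by linarith), log_div (by positivity) (by linarith),
        log_mul (by linarith) (by linarith)]
      ring
    have ecan1 : a * (s * t / a) = s * t := by field_simp
    have ecan2 : b * (s * (1 - t) / b) = s * (1 - t) := by field_simp
    have key1 : a * (log (a / s) - log t) ≥ a - s * t := by
      rw [e1, mul_neg]
      have h' := mul_le_mul_of_nonneg_left hulog (le_of_lt ha)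
      have hx : a * (s * t / a - 1) = s * t - a := by rw [mul_sub, ecan1, mul_one]
      linarith
    have key2 : b * (log (b / s) - log (1 - t)) ≥ b - s * (1 - t) := by
      rw [e2, mul_neg]
      have h' := mul_le_mul_of_nonneg_left hvlog (le_of_lt hb)
      have hx : b * (s * (1 - t) / b - 1) = s * (1 - t) - b := by
        rw [mul_sub, ecan2, mul_one]
      linarith
    constructor
    · nlinarith
    · constructor
      · intro h
        by_contra hne
        have hne' : s * t / a ≠ 1 := by
          intro hc
          apply hne
          field_simp at hc
          field_simp
          linarith
        have hstrict : log (s * t / a) < s * t / a - 1 := log_lt_sub_one_of_pos hu hne'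
        have key1' : a * (log (a / s) - log t) > a - s * t := by
          rw [e1, mul_neg]
          have h'' := mul_lt_mul_of_pos_left hstrict ha
          have hx : a * (s * t / a - 1) = s * t - a := by rw [mul_sub, ecan1, mul_one]
          linarith
        nlinarith
      · intro h
        have hta : s * t = a := by
          rw [h]; field_simp
        have htb : s * (1 - t) = b := by nlinarith
        have h1 : log (a / s) = log t := by
          congr 1
          field_simp
          linarith [hta]
        have h2 : log (b / s) = log (1 - t) := by
          congr 1
          field_simp
          linarith [htb]
        rw [← h1, ← h2]
/-- Functional optimal-discriminator lemma: if `p, q` are probability measures with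
densities `f, g` with respect to a σ-finite measure `μ`, then for every measurable
discriminator `D : X → (0,1)` (with integrable objective),
`∫ f·log D dμ + ∫ g·log (1 - D) dμ ≤ ∫_{f+g>0} [f·log (f/(f+g)) + g·log (g/(f+g))] dμ`,
with equality iff `D = f/(f+g)` μ-a.e. on `{f+g > 0}`. -/
theorem optimal_discriminator_functional {X : Type*} [MeasurableSpace X]
    (μ : Measure X) [SigmaFinite μ] (f g : X → ℝ)
    (hf : Measurable f) (hg : Measurable g)
    (hf0 : ∀ x, 0 ≤ f x) (hg0 : ∀ x, 0 ≤ g x)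
    (hfi : Integrable f μ) (hgi : Integrable g μ)
    (p q : Measure X)
    (hp : p = μ.withDensity (fun x => ENNReal.ofReal (f x)))
    (hq : q = μ.withDensity (fun x => ENNReal.ofReal (g x)))
    (hpP : IsProbabilityMeasure p) (hqP : IsProbabilityMeasure q)
    (D : X → ℝ) (hD : Measurable D) (hD01 : ∀ x, D x ∈ Set.Ioo (0 : ℝ) 1)
    (hint1 : Integrable (fun x => f x * log (D x)) μ)
    (hint2 : Integrable (fun x => g x * log (1 - D x)) μ) :
    (∫ x, f x * log (D x) ∂μ) + (∫ x, g x * log (1 - D x) ∂μ) ≤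
      ∫ x in {x | 0 < f x + g x},
        (f x * log (f x / (f x + g x)) + g x * log (g x / (f x + g x))) ∂μ ∧
    ((∫ x, f x * log (D x) ∂μ) + (∫ x, g x * log (1 - D x) ∂μ) =
      (∫ x in {x | 0 < f x + g x},
        (f x * log (f x / (f x + g x)) + g x * log (g x / (f x + g x))) ∂μ) ↔
      ∀ᵐ x ∂μ, 0 < f x + g x → D x = f x / (f x + g x)) := by
  have hD0 : ∀ x, 0 < D x := fun x => (hD01 x).1
  have hD1 : ∀ x, D x < 1 := fun x => (hD01 x).2
  set S : Set X := {x | 0 < f x + g x} with hSdef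
  have hSmeas : MeasurableSet S := measurableSet_lt measurable_const (hf.add hg)
  set G : X → ℝ := fun x => f x * log (D x) + g x * log (1 - D x) with hGdef
  set F : X → ℝ := fun x => f x * log (f x / (f x + g x)) + g x * log (g x / (f x + g x))
    with hFdef
  have hGint : Integrable G μ := hint1.add hint2
  have hsum : (∫ x, f x * log (D x) ∂μ) + (∫ x, g x * log (1 - D x) ∂μ) = ∫ x, G x ∂μ :=
    (integral_add hint1 hint2).symm
  have hzero : ∀ x ∉ S, G x = 0 := by
    intro x hx
    have hfg : f x + g x ≤ 0 := not_lt.1 hx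
    have hfx : f x = 0 := le_antisymm (by linarith [hg0 x]) (hf0 x)
    have hgx : g x = 0 := le_antisymm (by linarith [hf0 x]) (hg0 x)
    simp [hGdef, hfx, hgx]
  have h1 : ∫ x in S, G x ∂μ = ∫ x, G x ∂μ :=
    setIntegral_eq_integral_of_forall_compl_eq_zero hzero
  have hkey : ∀ x ∈ S, G x ≤ F x ∧ (G x = F x ↔ D x = f x / (f x + g x)) := by
    intro x hx
    exact opt_disc_key (f x) (g x) (D x) (hf0 x) (hg0 x) hx (hD0 x) (hD1 x)
  have hFle : ∀ x ∈ S, F x ≤ 0 := by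
    intro x hx
    have hs : (0 : ℝ) < f x + g x := hx
    have h1' : log (f x / (f x + g x)) ≤ 0 :=
      log_nonpos (div_nonneg (hf0 x) hs.le) ((div_le_one hs).2 (by linarith [hg0 x]))
    have h2' : log (g x / (f x + g x)) ≤ 0 :=
      log_nonpos (div_nonneg (hg0 x) hs.le) ((div_le_one hs).2 (by linarith [hf0 x]))
    have := mul_nonpos_of_nonneg_of_nonpos (hf0 x) h1'
    have := mul_nonpos_of_nonneg_of_nonpos (hg0 x) h2'
    simp only [hFdef]
    linarith
  have hFmeas : Measurable F := by
    apply Measurable.add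
    · exact hf.mul ((hf.div (hf.add hg)).log)
    · exact hg.mul ((hg.div (hf.add hg)).log)
  have hFint : IntegrableOn F S μ := by
    apply Integrable.mono (hGint.restrict) hFmeas.aestronglyMeasurable.restrict
    refine (ae_restrict_iff' hSmeas).2 (ae_of_all _ fun x hx => ?_)
    have hGF := (hkey x hx).1
    have hF0 := hFle x hx
    rw [Real.norm_eq_abs, Real.norm_eq_abs, abs_of_nonpos hF0,
      abs_of_nonpos (le_trans hGF hF0)]
    linarith
  have hle : ∫ x in S, G x ∂μ ≤ ∫ x in S, F x ∂μ :=
    setIntegral_mono_on hGint.integrableOn hFint hSmeas (fun x hx => (hkey x hx).1)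
  have hsub : ∫ x in S, (F x - G x) ∂μ = (∫ x in S, F x ∂μ) - ∫ x in S, G x ∂μ :=
    integral_sub hFint hGint.integrableOn
  have hnn : 0 ≤ᵐ[μ.restrict S] fun x => F x - G x :=
    (ae_restrict_iff' hSmeas).2 (ae_of_all _ fun x hx => sub_nonneg.2 (hkey x hx).1)
  have hiff := integral_eq_zero_iff_of_nonneg_ae hnn (hFint.sub hGint.integrableOn)
  constructor
  · rw [hsum, ← h1]; exact hle
  · rw [hsum, ← h1]
    constructor
    · intro h
      have h0 : ∫ x in S, (F x - G x) ∂μ = 0 := by rw [hsub, h]; ring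
      have hae := hiff.1 h0
      have h2 : ∀ᵐ x ∂μ.restrict S, F x - G x = 0 := by
        filter_upwards [hae] with x hx
        simpa using hx
      have h3 := (ae_restrict_iff' hSmeas).1 h2
      filter_upwards [h3] with x hx hxS
      have hfg := hx hxS
      exact ((hkey x hxS).2).1 (by linarith)
    · intro h
      have h2 : ∀ᵐ x ∂μ.restrict S, F x - G x = 0 := by
        refine (ae_restrict_iff' hSmeas).2 ?_
        filter_upwards [h] with x hx hxS
        have := ((hkey x hxS).2).2 (hx hxS)
        linarith
      have h0 : ∫ x in S, (F x - G x) ∂μ = 0 := by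
        refine hiff.2 ?_
        filter_upwards [h2] with x hx
        simpa using hx
      rw [hsub] at h0
      linarith
end

section
/- Let (X, 𝒜, μ) be a σ-finite measure space and let p and q be probability measures on X with densities f and g with respect to μ. Then ∫_{ {f+g>0} } [ f·log(f/(f+g)) + g·log(g/(f+g)) ] dμ = −2·log 2 + KL(p ‖ m) + KL(q ‖ m), where m = (1/2)(p + q) and KL denotes the Kullback–Leibler divergence. -/
/-!
Where `f + g > 0` the density of `p` with respect to `m = (p + q)/2` is `2f/(f+g)`, so
`KL(p ‖ m) = ∫ f log (2f/(f+g)) dμ = log 2 + ∫ f log (f/(f+g)) dμ`, and symmetrically for `q`.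
The integrand `f log (f/(f+g))` lies between `-g` and `0`, hence is integrable, and both
integrands vanish where `f + g = 0`.
-/

open MeasureTheory Real
open scoped ENNReal

/-- The Kullback–Leibler divergence `KL(p ‖ q) = ∫ log (dp/dq) dp`. -/
noncomputable def klDiv {X : Type*} [MeasurableSpace X] (p q : Measure X) : ℝ :=
  ∫ x, log ((p.rnDeriv q x).toReal) ∂p

lemma abs_mul_log_div_add_le {a b : ℝ} (ha : 0 ≤ a) (hb : 0 ≤ b) :
    |a * log (a / (a + b))| ≤ b := by
  rcases ha.eq_or_lt with rfl | ha
  · simpa using hb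
  have hab : 0 < a + b := by positivity
  have hlog_le : log (a / (a + b)) ≤ 0 :=
    log_nonpos (by positivity) ((div_le_one hab).mpr (le_add_of_nonneg_right hb))
  have hlog_ge : 1 - (a / (a + b))⁻¹ ≤ log (a / (a + b)) :=
    one_sub_inv_le_log_of_pos (by positivity)
  rw [abs_of_nonpos (mul_nonpos_of_nonneg_of_nonpos ha.le hlog_le)]
  calc -(a * log (a / (a + b))) ≤ -(a * (1 - (a / (a + b))⁻¹)) :=
        neg_le_neg (mul_le_mul_of_nonneg_left hlog_ge ha.le)
    _ = b := by field_simp; ring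

lemma mul_log_div_half_add {a b : ℝ} (ha : 0 ≤ a) (hb : 0 ≤ b) :
    a * log (a / ((a + b) / 2)) = a * log 2 + a * log (a / (a + b)) := by
  rcases ha.eq_or_lt with rfl | ha
  · simp
  rw [div_div_eq_mul_div, mul_comm a 2, mul_div_assoc,
    log_mul two_ne_zero (div_pos ha (by positivity)).ne', mul_add]

section WithDensity

variable {X : Type*} [MeasurableSpace X] {μ : Measure X} {f g : X → ℝ}

lemma integral_eq_one_of_isProbabilityMeasure_withDensity (hf : AEStronglyMeasurable f μ)
    (hf0 : 0 ≤ᵐ[μ] f) [IsProbabilityMeasure (μ.withDensity fun x => ENNReal.ofReal (f x))] :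
    ∫ x, f x ∂μ = 1 := by
  rw [integral_eq_lintegral_of_nonneg_ae hf0 hf, ← setLIntegral_univ,
    ← withDensity_apply _ MeasurableSet.univ, measure_univ, ENNReal.toReal_one]

lemma integrable_mul_log_div_add (hf : Measurable f) (hg : Measurable g)
    (hf0 : ∀ x, 0 ≤ f x) (hg0 : ∀ x, 0 ≤ g x) (hgi : Integrable g μ) :
    Integrable (fun x => f x * log (f x / (f x + g x))) μ :=
  hgi.mono' (by fun_prop) <| ae_of_all _ fun x => abs_mul_log_div_add_le (hf0 x) (hg0 x)

lemma inv_two_smul_withDensity_ofReal_add (hf : Measurable f)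
    (hf0 : ∀ x, 0 ≤ f x) (hg0 : ∀ x, 0 ≤ g x) :
    (2 : ℝ≥0∞)⁻¹ • (μ.withDensity (fun x => ENNReal.ofReal (f x)) +
      μ.withDensity (fun x => ENNReal.ofReal (g x))) =
      μ.withDensity (fun x => ENNReal.ofReal ((f x + g x) / 2)) := by
  rw [← withDensity_add_left (by fun_prop), ← withDensity_smul' _ _ (by norm_num)]
  congr 1
  funext x
  rw [Pi.smul_apply, Pi.add_apply, ← ENNReal.ofReal_add (hf0 x) (hg0 x), smul_eq_mul,
    ENNReal.ofReal_div_of_pos two_pos, ENNReal.ofReal_ofNat, ENNReal.div_eq_inv_mul]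

/-- `hfk` makes `p ≪ m` pointwise, so that `f / k` is a density of `p` with respect to `m`. -/
lemma klDiv_withDensity_ofReal [SigmaFinite μ] {k : X → ℝ} (hf : Measurable f)
    (hk : Measurable k) (hf0 : ∀ x, 0 ≤ f x) (hk0 : ∀ x, 0 ≤ k x)
    (hfk : ∀ x, k x = 0 → f x = 0) :
    klDiv (μ.withDensity fun x => ENNReal.ofReal (f x))
        (μ.withDensity fun x => ENNReal.ofReal (k x)) =
      ∫ x, f x * log (f x / k x) ∂μ := by
  set p := μ.withDensity fun x => ENNReal.ofReal (f x)
  set m := μ.withDensity fun x => ENNReal.ofReal (k x)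
  have hdensity : p = m.withDensity fun x => ENNReal.ofReal (f x / k x) := by
    rw [← withDensity_mul μ (by fun_prop) (by fun_prop)]
    refine congrArg μ.withDensity (funext fun x => ?_)
    rcases (hk0 x).eq_or_lt with hkx | hkx
    · simp [← hkx, hfk x hkx.symm]
    · rw [Pi.mul_apply, ← ENNReal.ofReal_mul hkx.le, mul_div_cancel₀ _ hkx.ne']
  have hrnDeriv : p.rnDeriv m =ᵐ[p] fun x => ENNReal.ofReal (f x / k x) := by
    rw [hdensity]
    exact (withDensity_absolutelyContinuous _ _).ae_eq (Measure.rnDeriv_withDensity m (by fun_prop))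
  rw [klDiv, integral_congr_ae (hrnDeriv.mono fun x hx => by rw [hx]),
    integral_withDensity_eq_integral_toReal_smul (by fun_prop)
      (ae_of_all _ fun _ => ENNReal.ofReal_lt_top)]
  refine integral_congr_ae (ae_of_all _ fun x => ?_)
  simp only [smul_eq_mul, ENNReal.toReal_ofReal (hf0 x),
    ENNReal.toReal_ofReal (div_nonneg (hf0 x) (hk0 x))]

lemma klDiv_withDensity_ofReal_mixture [SigmaFinite μ] (hf : Measurable f) (hg : Measurable g)
    (hf0 : ∀ x, 0 ≤ f x) (hg0 : ∀ x, 0 ≤ g x) (hfi : Integrable f μ) (hgi : Integrable g μ) :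
    klDiv (μ.withDensity fun x => ENNReal.ofReal (f x))
        ((2 : ℝ≥0∞)⁻¹ • (μ.withDensity (fun x => ENNReal.ofReal (f x)) +
          μ.withDensity (fun x => ENNReal.ofReal (g x)))) =
      (∫ x, f x ∂μ) * log 2 + ∫ x, f x * log (f x / (f x + g x)) ∂μ := by
  have hfk : ∀ x, (f x + g x) / 2 = 0 → f x = 0 := fun x hx => by linarith [hf0 x, hg0 x]
  rw [inv_two_smul_withDensity_ofReal_add hf hf0 hg0,
    klDiv_withDensity_ofReal hf (by fun_prop) hf0 (fun x => by linarith [hf0 x, hg0 x]) hfk,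
    ← integral_mul_const, ← integral_add (hfi.mul_const _)
      (integrable_mul_log_div_add hf hg hf0 hg0 hgi)]
  exact integral_congr_ae (ae_of_all _ fun x => mul_log_div_half_add (hf0 x) (hg0 x))

end WithDensity

/-- Substituting the optimal discriminator into the adversarial objective:
if `p, q` are probability measures with densities `f, g` with respect to a σ-finite
measure `μ`, and `m = (1/2)(p + q)`, then
`∫_{f+g>0} [f·log (f/(f+g)) + g·log (g/(f+g))] dμ = -2·log 2 + KL(p ‖ m) + KL(q ‖ m)`. -/
theorem optimal_discriminator_objective_value {X : Type*} [MeasurableSpace X]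
    (μ : Measure X) [SigmaFinite μ] (f g : X → ℝ)
    (hf : Measurable f) (hg : Measurable g)
    (hf0 : ∀ x, 0 ≤ f x) (hg0 : ∀ x, 0 ≤ g x)
    (hfi : Integrable f μ) (hgi : Integrable g μ)
    (p q m : Measure X)
    (hp : p = μ.withDensity (fun x => ENNReal.ofReal (f x)))
    (hq : q = μ.withDensity (fun x => ENNReal.ofReal (g x)))
    (hpP : IsProbabilityMeasure p) (hqP : IsProbabilityMeasure q)
    (hm : m = (2 : ℝ≥0∞)⁻¹ • (p + q)) :
    ∫ x in {x | 0 < f x + g x},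
        (f x * log (f x / (f x + g x)) + g x * log (g x / (f x + g x))) ∂μ =
      -2 * log 2 + klDiv p m + klDiv q m := by
  subst hp hq hm
  have hf1 := integral_eq_one_of_isProbabilityMeasure_withDensity hf.aestronglyMeasurable
    (ae_of_all μ hf0)
  have hg1 := integral_eq_one_of_isProbabilityMeasure_withDensity hg.aestronglyMeasurable
    (ae_of_all μ hg0)
  have hvanish : ∀ x, x ∉ {x | 0 < f x + g x} →
      f x * log (f x / (f x + g x)) + g x * log (g x / (f x + g x)) = 0 := by
    intro x hx
    have hsum : f x + g x ≤ 0 := not_lt.mp hx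
    obtain ⟨hfx, hgx⟩ : f x = 0 ∧ g x = 0 :=
      ⟨by linarith [hf0 x, hg0 x], by linarith [hf0 x, hg0 x]⟩
    simp [hfx, hgx]
  rw [setIntegral_eq_integral_of_forall_compl_eq_zero hvanish,
    integral_add (integrable_mul_log_div_add hf hg hf0 hg0 hgi)
      (by simpa only [add_comm (g _)] using integrable_mul_log_div_add hg hf hg0 hf0 hfi),
    klDiv_withDensity_ofReal_mixture hf hg hf0 hg0 hfi hgi, add_comm (μ.withDensity _),
    klDiv_withDensity_ofReal_mixture hg hf hg0 hf0 hgi hfi, hf1, hg1]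
  simp only [add_comm (g _)]
  ring
end

section
/- Let p and q be probability measures on a measurable space X. Then sup over measurable D : X → (0, 1) of ( ∫ log(D) dp + ∫ log(1 − D) dq ) = −2·log 2 + 2·JSD(p, q). -/
open MeasureTheory Real Set
open scoped ENNReal

/-- The Jensen–Shannon divergence
`JSD(p, q) = (1/2)·KL(p ‖ m) + (1/2)·KL(q ‖ m)` with `m = (1/2)(p + q)`. -/
noncomputable def jsd {X : Type*} [MeasurableSpace X] (p q : Measure X) : ℝ :=
  (1 / 2) * klDiv p ((2 : ℝ≥0∞)⁻¹ • (p + q)) + (1 / 2) * klDiv q ((2 : ℝ≥0∞)⁻¹ • (p + q))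

lemma mul_log_le_mul_log_add_sub {a t : ℝ} (ha : 0 ≤ a) (ht : 0 < t) :
    a * log t ≤ a * log a + (t - a) := by
  rcases ha.eq_or_lt with rfl | ha
  · simpa using ht.le
  · have h := mul_le_mul_of_nonneg_left (log_le_sub_one_of_pos (div_pos ht ha)) ha.le
    rw [log_div ht.ne' ha.ne', mul_sub_one, mul_div_cancel₀ _ ha.ne'] at h
    linarith

lemma mul_log_add_mul_log_one_sub_le {a b t : ℝ} (ha : 0 ≤ a) (hb : 0 ≤ b) (hab : a + b = 1)
    (ht : t ∈ Ioo (0 : ℝ) 1) :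
    a * log t + b * log (1 - t) ≤ a * log a + b * log b := by
  have h₁ := mul_log_le_mul_log_add_sub ha ht.1
  have h₂ := mul_log_le_mul_log_add_sub hb (sub_pos.2 ht.2)
  linarith

lemma abs_mul_log_le_one {x : ℝ} (h₀ : 0 ≤ x) (h₁ : x ≤ 1) : |x * log x| ≤ 1 := by
  rw [abs_of_nonpos (mul_log_nonpos h₀ h₁)]
  linarith [self_sub_one_le_mul_log h₀]

section Measure

variable {X : Type*} [MeasurableSpace X]

lemma integrable_log_of_forall_mem_Icc {μ : Measure X} [IsFiniteMeasure μ] {f : X → ℝ}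
    (hf : Measurable f) {c : ℝ} (hc : 0 < c) (h : ∀ x, f x ∈ Icc c 1) :
    Integrable (fun x => log (f x)) μ :=
  Integrable.of_bound hf.log.aestronglyMeasurable (-log c) <| ae_of_all _ fun x => by
    rw [norm_eq_abs, abs_of_nonpos (log_nonpos (hc.le.trans (h x).1) (h x).2), neg_le_neg_iff]
    exact log_le_log hc (h x).1

lemma integrable_log_toReal_rnDeriv_of_le {μ ν : Measure X} [IsFiniteMeasure ν] (h : μ ≤ ν) :
    Integrable (fun x => log (μ.rnDeriv ν x).toReal) μ := by
  have : IsFiniteMeasure μ := isFiniteMeasure_of_le ν h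
  rw [← integrable_toReal_rnDeriv_mul_iff (Measure.absolutelyContinuous_of_le h)]
  refine Integrable.of_bound (by fun_prop) 1 ?_
  filter_upwards [Measure.rnDeriv_le_one_of_le h] with x hx
  exact abs_mul_log_le_one ENNReal.toReal_nonneg
    (ENNReal.toReal_le_of_le_ofReal zero_le_one (by simpa using hx))

lemma toReal_rnDeriv_pos {μ ν : Measure X} [SigmaFinite μ] [SigmaFinite ν] (hμν : μ ≪ ν) :
    ∀ᵐ x ∂μ, 0 < (μ.rnDeriv ν x).toReal := by
  filter_upwards [Measure.rnDeriv_pos hμν, hμν.ae_le (Measure.rnDeriv_lt_top μ ν)]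
    with x hpos hfin
  exact ENNReal.toReal_pos hpos.ne' hfin.ne

lemma klDiv_smul_right {μ ν : Measure X} [IsProbabilityMeasure μ] [SigmaFinite ν]
    (hμν : μ ≪ ν) {c : ℝ≥0∞} (hc₀ : c ≠ 0) (hc : c ≠ ∞)
    (hint : Integrable (fun x => log (μ.rnDeriv ν x).toReal) μ) :
    klDiv μ (c • ν) = klDiv μ ν - log c.toReal := by
  have hae : ∀ᵐ x ∂μ, log (μ.rnDeriv (c • ν) x).toReal =
      log (μ.rnDeriv ν x).toReal - log c.toReal := by
    filter_upwards [hμν.ae_le (Measure.rnDeriv_smul_right_of_ne_top' μ ν hc₀ hc),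
      toReal_rnDeriv_pos hμν] with x hx hpos
    rw [hx, Pi.smul_apply, smul_eq_mul, ENNReal.toReal_mul, ENNReal.toReal_inv,
      log_mul (inv_ne_zero (ENNReal.toReal_ne_zero.2 ⟨hc₀, hc⟩)) hpos.ne', log_inv]
    ring
  rw [klDiv, integral_congr_ae hae, integral_sub hint (integrable_const _), integral_const,
    probReal_univ, one_smul, klDiv]

lemma toReal_rnDeriv_add_toReal_rnDeriv_eq_one (p q : Measure X) [IsFiniteMeasure p]
    [IsFiniteMeasure q] :
    ∀ᵐ x ∂(p + q), (p.rnDeriv (p + q) x).toReal + (q.rnDeriv (p + q) x).toReal = 1 := by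
  filter_upwards [Measure.rnDeriv_add' p q (p + q), Measure.rnDeriv_self (p + q),
    Measure.rnDeriv_lt_top p (p + q), Measure.rnDeriv_lt_top q (p + q)] with x hadd hself hp hq
  rw [← ENNReal.toReal_add hp.ne hq.ne, ← Pi.add_apply, ← hadd, hself, ENNReal.toReal_one]

lemma jsd_eq_log_two_add (p q : Measure X) [IsProbabilityMeasure p] [IsProbabilityMeasure q] :
    jsd p q = log 2 + (klDiv p (p + q) + klDiv q (p + q)) / 2 := by
  have hp : p ≤ p + q := Measure.le_add_right le_rfl
  have hq : q ≤ p + q := Measure.le_add_left le_rfl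
  rw [jsd, klDiv_smul_right (Measure.absolutelyContinuous_of_le hp) (by simp) (by simp)
      (integrable_log_toReal_rnDeriv_of_le hp),
    klDiv_smul_right (Measure.absolutelyContinuous_of_le hq) (by simp) (by simp)
      (integrable_log_toReal_rnDeriv_of_le hq)]
  simp only [ENNReal.toReal_inv, ENNReal.toReal_ofNat, log_inv]
  ring

theorem integral_log_add_integral_log_one_sub_le {p q : Measure X} [IsFiniteMeasure p]
    [IsFiniteMeasure q] {D : X → ℝ} (hD : ∀ x, D x ∈ Ioo (0 : ℝ) 1)
    (hp : Integrable (fun x => log (D x)) p) (hq : Integrable (fun x => log (1 - D x)) q) :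
    ∫ x, log (D x) ∂p + ∫ x, log (1 - D x) ∂q ≤ klDiv p (p + q) + klDiv q (p + q) := by
  set P : X → ℝ := fun x => (p.rnDeriv (p + q) x).toReal
  set Q : X → ℝ := fun x => (q.rnDeriv (p + q) x).toReal
  have hpν : p ≤ p + q := Measure.le_add_right le_rfl
  have hqν : q ≤ p + q := Measure.le_add_left le_rfl
  have hac_p := Measure.absolutelyContinuous_of_le hpν
  have hac_q := Measure.absolutelyContinuous_of_le hqν
  have hPD := (integrable_toReal_rnDeriv_mul_iff hac_p).2 hp
  have hQD := (integrable_toReal_rnDeriv_mul_iff hac_q).2 hq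
  have hPP := (integrable_toReal_rnDeriv_mul_iff hac_p).2 (integrable_log_toReal_rnDeriv_of_le hpν)
  have hQQ := (integrable_toReal_rnDeriv_mul_iff hac_q).2 (integrable_log_toReal_rnDeriv_of_le hqν)
  calc ∫ x, log (D x) ∂p + ∫ x, log (1 - D x) ∂q
      = ∫ x, (P x * log (D x) + Q x * log (1 - D x)) ∂(p + q) := by
        rw [integral_add hPD hQD, integral_toReal_rnDeriv_mul hac_p,
          integral_toReal_rnDeriv_mul hac_q]
    _ ≤ ∫ x, (P x * log (P x) + Q x * log (Q x)) ∂(p + q) := by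
        refine integral_mono_ae (hPD.add hQD) (hPP.add hQQ) ?_
        filter_upwards [toReal_rnDeriv_add_toReal_rnDeriv_eq_one p q] with x hx
        exact mul_log_add_mul_log_one_sub_le ENNReal.toReal_nonneg ENNReal.toReal_nonneg hx (hD x)
    _ = klDiv p (p + q) + klDiv q (p + q) := by
        rw [integral_add hPP hQQ, integral_toReal_rnDeriv_mul hac_p,
          integral_toReal_rnDeriv_mul hac_q, klDiv, klDiv]

lemma log_add_log_le_log_one_sub_div_two_add_mul {s r : ℝ} (hs₀ : 0 < s) (hs₁ : s < 1)
    (hr : 0 < r) : log s + log r ≤ log ((1 - s) / 2 + s * r) := by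
  rw [← log_mul hs₀.ne' hr.ne']
  exact log_le_log (by positivity) (by linarith)

lemma klDiv_add_log_le_integral_log {μ ν : Measure X} [IsProbabilityMeasure μ]
    [IsFiniteMeasure ν] (h : μ ≤ ν) {s : ℝ} (hs₀ : 0 < s) (hs₁ : s < 1) {f : X → ℝ}
    (hf : Integrable (fun x => log (f x)) μ)
    (hfν : ∀ᵐ x ∂ν, f x = (1 - s) / 2 + s * (μ.rnDeriv ν x).toReal) :
    klDiv μ ν + log s ≤ ∫ x, log (f x) ∂μ := by
  have hac := Measure.absolutelyContinuous_of_le h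
  have hle : ∀ᵐ x ∂μ, log s + log (μ.rnDeriv ν x).toReal ≤ log (f x) := by
    filter_upwards [hac.ae_le hfν, toReal_rnDeriv_pos hac] with x hx hpos
    rw [hx]
    exact log_add_log_le_log_one_sub_div_two_add_mul hs₀ hs₁ hpos
  have hint := integrable_log_toReal_rnDeriv_of_le h
  calc klDiv μ ν + log s = ∫ x, (log s + log (μ.rnDeriv ν x).toReal) ∂μ := by
        rw [integral_add (integrable_const _) hint, integral_const, probReal_univ, one_smul, klDiv,
          add_comm]
    _ ≤ ∫ x, log (f x) ∂μ := integral_mono_ae ((integrable_const _).add hint) hf hle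

theorem exists_le_integral_log_add_integral_log_one_sub {p q : Measure X}
    [IsProbabilityMeasure p] [IsProbabilityMeasure q] {s : ℝ} (hs₀ : 0 < s) (hs₁ : s < 1) :
    ∃ D : X → ℝ, Measurable D ∧ (∀ x, D x ∈ Ioo (0 : ℝ) 1) ∧
      Integrable (fun x => log (D x)) p ∧ Integrable (fun x => log (1 - D x)) q ∧
      klDiv p (p + q) + klDiv q (p + q) + 2 * log s ≤
        ∫ x, log (D x) ∂p + ∫ x, log (1 - D x) ∂q := by
  set P : X → ℝ := fun x => (p.rnDeriv (p + q) x).toReal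
  set Q : X → ℝ := fun x => (q.rnDeriv (p + q) x).toReal
  -- `P ≤ 1` only almost everywhere, so it is truncated to keep `D` in `(0, 1)` everywhere.
  set D : X → ℝ := fun x => (1 - s) / 2 + s * min (P x) 1
  have hD : ∀ x, D x ∈ Icc ((1 - s) / 2) 1 ∧ 1 - D x ∈ Icc ((1 - s) / 2) 1 := fun x => by
    have h₀ : 0 ≤ s * min (P x) 1 :=
      mul_nonneg hs₀.le (le_min ENNReal.toReal_nonneg zero_le_one)
    have h₁ : s * min (P x) 1 ≤ s := mul_le_of_le_one_right hs₀.le (min_le_right _ _)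
    simp only [D, mem_Icc]
    refine ⟨⟨?_, ?_⟩, ?_, ?_⟩ <;> linarith
  have hDm : Measurable D := by fun_prop
  have hlogD := integrable_log_of_forall_mem_Icc (μ := p) hDm (by linarith) fun x => (hD x).1
  have hlog1D := integrable_log_of_forall_mem_Icc (μ := q) (f := fun x => 1 - D x)
    (measurable_const.sub hDm) (by linarith) fun x => (hD x).2
  have hDP : ∀ᵐ x ∂(p + q),
      D x = (1 - s) / 2 + s * P x ∧ 1 - D x = (1 - s) / 2 + s * Q x := by
    filter_upwards [toReal_rnDeriv_add_toReal_rnDeriv_eq_one p q] with x (hPQ : P x + Q x = 1)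
    have hP : min (P x) 1 = P x :=
      min_eq_left (by linarith [show 0 ≤ Q x from ENNReal.toReal_nonneg])
    simp only [D, hP, true_and]
    linear_combination (-s) * hPQ
  refine ⟨D, hDm, fun x => ⟨by linarith [(hD x).1.1], by linarith [(hD x).2.1]⟩, hlogD,
    hlog1D, ?_⟩
  have hp := klDiv_add_log_le_integral_log (Measure.le_add_right le_rfl) hs₀ hs₁ hlogD
    (hDP.mono fun _ hx => hx.1)
  have hq := klDiv_add_log_le_integral_log (Measure.le_add_left le_rfl) hs₀ hs₁ hlog1D
    (hDP.mono fun _ hx => hx.2)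
  linarith

end Measure

/-- The supremum over measurable discriminators `D : X → (0,1)` of the adversarial
objective `∫ log D dp + ∫ log (1 - D) dq` equals `-2·log 2 + 2·JSD(p, q)`. -/
theorem adversarial_objective_sup_eq_jsd {X : Type*} [MeasurableSpace X]
    (p q : Measure X) [IsProbabilityMeasure p] [IsProbabilityMeasure q] :
    sSup {r : ℝ | ∃ D : X → ℝ, Measurable D ∧ (∀ x, D x ∈ Set.Ioo (0 : ℝ) 1) ∧
        Integrable (fun x => log (D x)) p ∧ Integrable (fun x => log (1 - D x)) q ∧
        r = (∫ x, log (D x) ∂p) + (∫ x, log (1 - D x) ∂q)} =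
      -2 * log 2 + 2 * jsd p q := by
  set K := klDiv p (p + q) + klDiv q (p + q)
  have hK : -2 * log 2 + 2 * jsd p q = K := by rw [jsd_eq_log_two_add]; ring
  rw [hK]
  refine csSup_eq_of_forall_le_of_forall_lt_exists_gt
    ⟨_, fun _ => 1 / 2, measurable_const, fun _ => by norm_num, integrable_const _,
      integrable_const _, rfl⟩ ?_ ?_
  · rintro _ ⟨D, -, hD, hp, hq, rfl⟩
    exact integral_log_add_integral_log_one_sub_le hD hp hq
  · intro w hw
    obtain ⟨D, hDm, hD, hp, hq, hle⟩ := exists_le_integral_log_add_integral_log_one_sub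
      (p := p) (q := q) (exp_pos ((w - K) / 4)) (exp_lt_one_iff.2 (by linarith))
    refine ⟨_, ⟨D, hDm, hD, hp, hq, rfl⟩, ?_⟩
    rw [log_exp] at hle
    linarith
end

section
/- Let p₁, …, p_M and q be probability measures on a measurable space X, let p̄ = (1/M)·(p₁ + ⋯ + p_M) denote their uniform mixture, and let F : X → Z be a measurable map into a measurable space Z. Then sup over measurable D : Z → (0, 1) of ( (1/M)·Σ_{i=1}^{M} ∫ log(D(F(x))) dp_i(x) + ∫ log(1 − D(F(x))) dq(x) ) = −2·log 2 + 2·JSD(F_* p̄, F_* q), where F_* denotes the pushforward of a measure along F. -/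
/-!
Let `m = (μ + ν)/2` and `f = dμ/dm`, `g = dν/dm`, so that `f + g = 2`. Against `m`, the objective
of a discriminator `D` is `∫ (f log D + g log (1 - D)) dm`, and pointwise
`f log d + g log (1 - d) ≤ f log (f/2) + g log (g/2)` with equality at `d = f/2` (Gibbs' inequality
for two points). Integrating gives the bound `KL(μ ‖ m) + KL(ν ‖ m) - 2 log 2 = -2 log 2 + 2 JSD`.
The optimum `f/2` may take the values `0` and `1`, so it is only approached, by
`(1 - t)/2 + t f/2`, which loses at most `2 log t`. For the theorem itself, pushing forward along `F`
and averaging the sources turn the multi-source objective into this one for `F_* p̄` and `F_* q`.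
-/

open MeasureTheory Real
open scoped ENNReal

open Set

lemma klDiv_eq_integral_llr {Z : Type*} [MeasurableSpace Z] (μ ν : Measure Z) :
    klDiv μ ν = ∫ z, llr μ ν z ∂μ :=
  rfl

namespace Real

lemma mul_log_le_mul_log_add_sub {s t : ℝ} (hs : 0 < s) (ht : 0 ≤ t) :
    t * log s ≤ t * log t + (s - t) := by
  rcases ht.eq_or_lt with rfl | ht
  · simpa using hs.le
  calc t * log s = t * log t + t * log (s / t) := by
        rw [log_div hs.ne' ht.ne']; ring
    _ ≤ t * log t + t * (s / t - 1) := by gcongr; exact log_le_sub_one_of_pos (by positivity)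
    _ = t * log t + (s - t) := by field_simp

lemma mul_log_add_mul_log_one_sub_le {a b d : ℝ} (ha : 0 ≤ a) (hb : 0 ≤ b) (hab : a + b = 2)
    (hd : d ∈ Ioo 0 1) : a * log d + b * log (1 - d) ≤ a * log a + b * log b - 2 * log 2 := by
  have h₁ := mul_log_le_mul_log_add_sub (by linarith [hd.1] : 0 < 2 * d) ha
  have h₂ := mul_log_le_mul_log_add_sub (by linarith [hd.2] : 0 < 2 * (1 - d)) hb
  rw [log_mul two_ne_zero hd.1.ne'] at h₁
  rw [log_mul two_ne_zero (by linarith [hd.2])] at h₂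
  linear_combination h₁ + h₂ + (-1 - log 2) * hab

lemma abs_mul_log_le_two {t : ℝ} (h₀ : 0 ≤ t) (h₂ : t ≤ 2) : |t * log t| ≤ 2 := by
  have hupper : t * log t ≤ t * (t - 1) := by
    rcases h₀.eq_or_lt with rfl | ht
    · simp
    · gcongr; exact log_le_sub_one_of_pos ht
  rw [abs_le]
  constructor <;> nlinarith [self_sub_one_le_mul_log h₀]

end Real

noncomputable def halfMixture {Z : Type*} [MeasurableSpace Z] (μ ν : Measure Z) : Measure Z :=
  (2 : ℝ≥0∞)⁻¹ • (μ + ν)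

section HalfMixture

variable {Z : Type*} [MeasurableSpace Z]

lemma halfMixture_comm (μ ν : Measure Z) : halfMixture μ ν = halfMixture ν μ := by
  rw [halfMixture, add_comm, halfMixture]

lemma absolutelyContinuous_halfMixture_left (μ ν : Measure Z) : μ ≪ halfMixture μ ν :=
  (Measure.AbsolutelyContinuous.rfl.add_right ν).smul_right (by simp)

lemma absolutelyContinuous_halfMixture_right (μ ν : Measure Z) : ν ≪ halfMixture μ ν :=
  halfMixture_comm ν μ ▸ absolutelyContinuous_halfMixture_left ν μ

variable (μ ν : Measure Z) [IsProbabilityMeasure μ] [IsProbabilityMeasure ν]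

instance : IsProbabilityMeasure (halfMixture μ ν) :=
  ⟨by simp [halfMixture, ENNReal.inv_two_add_inv_two]⟩

lemma toReal_rnDeriv_add_toReal_rnDeriv_halfMixture :
    ∀ᵐ z ∂halfMixture μ ν, (μ.rnDeriv (halfMixture μ ν) z).toReal +
      (ν.rnDeriv (halfMixture μ ν) z).toReal = 2 := by
  have hm : μ + ν = (2 : ℝ≥0∞) • halfMixture μ ν := by
    rw [halfMixture, smul_smul, ENNReal.mul_inv_cancel two_ne_zero ENNReal.ofNat_ne_top, one_smul]
  set m := halfMixture μ ν
  have hadd : (μ + ν).rnDeriv m =ᵐ[m] μ.rnDeriv m + ν.rnDeriv m := Measure.rnDeriv_add' μ ν m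
  filter_upwards [hadd, Measure.rnDeriv_smul_left_of_ne_top m m (ENNReal.ofNat_ne_top (n := 2)),
    Measure.rnDeriv_self m, μ.rnDeriv_ne_top m, ν.rnDeriv_ne_top m]
    with z hsum hsmul hself hμ hν
  rw [← ENNReal.toReal_add hμ hν, ← Pi.add_apply, ← hsum, hm, hsmul]
  simp [hself]

lemma toReal_rnDeriv_halfMixture_le_two :
    ∀ᵐ z ∂halfMixture μ ν, (μ.rnDeriv (halfMixture μ ν) z).toReal ≤ 2 := by
  filter_upwards [toReal_rnDeriv_add_toReal_rnDeriv_halfMixture μ ν] with z hz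
  linarith [(ν.rnDeriv (halfMixture μ ν) z).toReal_nonneg]

lemma integrable_llr_halfMixture_left : Integrable (llr μ (halfMixture μ ν)) μ := by
  rw [← integrable_rnDeriv_mul_log_iff (absolutelyContinuous_halfMixture_left μ ν)]
  refine (integrable_const (2 : ℝ)).mono' (by fun_prop) ?_
  filter_upwards [toReal_rnDeriv_halfMixture_le_two μ ν] with z hz
  exact abs_mul_log_le_two ENNReal.toReal_nonneg hz

lemma integrable_llr_halfMixture_right : Integrable (llr ν (halfMixture μ ν)) ν :=
  halfMixture_comm ν μ ▸ integrable_llr_halfMixture_left ν μ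

end HalfMixture

lemma log_add_integral_llr_le_integral_log {Z : Type*} [MeasurableSpace Z] {ρ m : Measure Z}
    [IsProbabilityMeasure ρ] [SigmaFinite m] (hρm : ρ ≪ m) {c : ℝ} (hc : 0 < c) {h : Z → ℝ}
    (hh : Integrable (fun z => log (h z)) ρ) (hllr : Integrable (llr ρ m) ρ)
    (hle : ∀ᵐ z ∂ρ, c * (ρ.rnDeriv m z).toReal ≤ h z) :
    log c + ∫ z, llr ρ m z ∂ρ ≤ ∫ z, log (h z) ∂ρ := by
  have hpos : ∀ᵐ z ∂ρ, 0 < (ρ.rnDeriv m z).toReal := by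
    filter_upwards [Measure.rnDeriv_pos hρm, hρm.ae_le (ρ.rnDeriv_ne_top m)] with z h₀ htop
    exact ENNReal.toReal_pos h₀.ne' htop
  calc log c + ∫ z, llr ρ m z ∂ρ = ∫ z, (log c + llr ρ m z) ∂ρ := by
        rw [integral_add (integrable_const _) hllr, integral_const, probReal_univ, one_smul]
    _ ≤ ∫ z, log (h z) ∂ρ := by
        refine integral_mono_ae ((integrable_const _).add hllr) hh ?_
        filter_upwards [hpos, hle] with z hz hcz
        rw [llr, ← log_mul hc.ne' hz.ne']
        exact log_le_log (by positivity) hcz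

lemma integrable_log_of_mem_Icc {Z : Type*} [MeasurableSpace Z] {ρ : Measure Z}
    [IsFiniteMeasure ρ] {h : Z → ℝ} (hh : Measurable h) {c : ℝ} (hc : 0 < c)
    (hbd : ∀ z, h z ∈ Icc c 1) : Integrable (fun z => log (h z)) ρ := by
  refine (integrable_const (-log c)).mono' hh.log.aestronglyMeasurable
    (ae_of_all _ fun z => ?_)
  have hz := hbd z
  rw [norm_eq_abs, abs_of_nonpos (log_nonpos (hc.le.trans hz.1) hz.2), neg_le_neg_iff]
  exact log_le_log hc hz.1

def adversarialValues {Z : Type*} [MeasurableSpace Z] (μ ν : Measure Z) : Set ℝ :=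
  {r | ∃ D : Z → ℝ, Measurable D ∧ (∀ z, D z ∈ Ioo (0 : ℝ) 1) ∧
    Integrable (fun z => log (D z)) μ ∧ Integrable (fun z => log (1 - D z)) ν ∧
    r = (∫ z, log (D z) ∂μ) + ∫ z, log (1 - D z) ∂ν}

section AdversarialValues

variable {Z : Type*} [MeasurableSpace Z] (μ ν : Measure Z) [IsProbabilityMeasure μ]
  [IsProbabilityMeasure ν]

lemma integral_log_add_integral_log_one_sub_le_s5 {D : Z → ℝ} (hD : ∀ z, D z ∈ Ioo (0 : ℝ) 1)
    (hμD : Integrable (fun z => log (D z)) μ) (hνD : Integrable (fun z => log (1 - D z)) ν) :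
    (∫ z, log (D z) ∂μ) + ∫ z, log (1 - D z) ∂ν ≤
      klDiv μ (halfMixture μ ν) + klDiv ν (halfMixture μ ν) - 2 * log 2 := by
  set m := halfMixture μ ν
  set f := fun z => (μ.rnDeriv m z).toReal
  set g := fun z => (ν.rnDeriv m z).toReal
  have hμm := absolutelyContinuous_halfMixture_left μ ν
  have hνm := absolutelyContinuous_halfMixture_right μ ν
  have hfD : Integrable (fun z => f z * log (D z)) m :=
    (integrable_toReal_rnDeriv_mul_iff hμm).2 hμD
  have hgD : Integrable (fun z => g z * log (1 - D z)) m :=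
    (integrable_toReal_rnDeriv_mul_iff hνm).2 hνD
  have hff : Integrable (fun z => f z * log (f z)) m :=
    (integrable_rnDeriv_mul_log_iff hμm).2 (integrable_llr_halfMixture_left μ ν)
  have hgg : Integrable (fun z => g z * log (g z)) m :=
    (integrable_rnDeriv_mul_log_iff hνm).2 (integrable_llr_halfMixture_right μ ν)
  have hffgg : Integrable (fun z => f z * log (f z) + g z * log (g z)) m := hff.add hgg
  calc (∫ z, log (D z) ∂μ) + ∫ z, log (1 - D z) ∂ν
      = ∫ z, (f z * log (D z) + g z * log (1 - D z)) ∂m := by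
        rw [integral_add hfD hgD, integral_toReal_rnDeriv_mul hμm, integral_toReal_rnDeriv_mul hνm]
    _ ≤ ∫ z, (f z * log (f z) + g z * log (g z) - 2 * log 2) ∂m := by
        refine integral_mono_ae (hfD.add hgD) (hffgg.sub (integrable_const _)) ?_
        filter_upwards [toReal_rnDeriv_add_toReal_rnDeriv_halfMixture μ ν] with z hz
        exact mul_log_add_mul_log_one_sub_le ENNReal.toReal_nonneg ENNReal.toReal_nonneg hz (hD z)
    _ = klDiv μ m + klDiv ν m - 2 * log 2 := by
        rw [integral_sub hffgg (integrable_const _), integral_add hff hgg,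
          integral_rnDeriv_mul_log hμm, integral_rnDeriv_mul_log hνm, integral_const,
          probReal_univ, one_smul]
        rfl

lemma exists_mem_adversarialValues_ge {t : ℝ} (ht₀ : 0 < t) (ht₁ : t < 1) :
    ∃ r ∈ adversarialValues μ ν,
      klDiv μ (halfMixture μ ν) + klDiv ν (halfMixture μ ν) - 2 * log 2 + 2 * log t ≤ r := by
  have hμm := absolutelyContinuous_halfMixture_left μ ν
  have hνm := absolutelyContinuous_halfMixture_right μ ν
  set f := fun z => (μ.rnDeriv (halfMixture μ ν) z).toReal
  set g := fun z => (ν.rnDeriv (halfMixture μ ν) z).toReal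
  have hf_le : ∀ᵐ z ∂halfMixture μ ν, f z ≤ 2 := toReal_rnDeriv_halfMixture_le_two μ ν
  have hfg : ∀ᵐ z ∂halfMixture μ ν, f z + g z = 2 :=
    toReal_rnDeriv_add_toReal_rnDeriv_halfMixture μ ν
  -- `min` makes the bounds on `D` hold everywhere, not only almost everywhere.
  set D := fun z => (1 - t) / 2 + t * min (f z) 2 / 2
  have hD : Measurable D := by fun_prop
  have hD_bounds : ∀ z, (1 - t) / 2 ≤ D z ∧ D z ≤ (1 + t) / 2 := fun z => by
    have h₀ : 0 ≤ min (f z) 2 := le_min ENNReal.toReal_nonneg zero_le_two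
    have h₂ : min (f z) 2 ≤ 2 := min_le_right _ _
    simp only [D]
    constructor <;> nlinarith
  have hc : 0 < (1 - t) / 2 := by linarith
  have hμD : Integrable (fun z => log (D z)) μ :=
    integrable_log_of_mem_Icc hD hc fun z => ⟨(hD_bounds z).1, by linarith [(hD_bounds z).2]⟩
  have hνD : Integrable (fun z => log (1 - D z)) ν :=
    integrable_log_of_mem_Icc (measurable_const.sub hD) hc fun z =>
      ⟨by linarith [(hD_bounds z).2], by linarith [(hD_bounds z).1]⟩
  have hμle : ∀ᵐ z ∂μ, t / 2 * f z ≤ D z := by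
    filter_upwards [hμm.ae_le hf_le] with z hz
    simp only [D, min_eq_left hz]
    nlinarith
  have hνle : ∀ᵐ z ∂ν, t / 2 * g z ≤ 1 - D z := by
    filter_upwards [hνm.ae_le hfg, hνm.ae_le hf_le] with z hsum hz
    simp only [D, min_eq_left hz]
    nlinarith
  have hμ := log_add_integral_llr_le_integral_log hμm (by positivity) hμD
    (integrable_llr_halfMixture_left μ ν) hμle
  have hν := log_add_integral_llr_le_integral_log hνm (by positivity) hνD
    (integrable_llr_halfMixture_right μ ν) hνle
  rw [log_div ht₀.ne' two_ne_zero] at hμ hν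
  refine ⟨_, ⟨D, hD, fun z => ⟨by linarith [(hD_bounds z).1], by linarith [(hD_bounds z).2]⟩,
    hμD, hνD, rfl⟩, ?_⟩
  rw [klDiv_eq_integral_llr, klDiv_eq_integral_llr]
  linarith

theorem sSup_adversarialValues :
    sSup (adversarialValues μ ν) = -2 * log 2 + 2 * jsd μ ν := by
  set J := klDiv μ (halfMixture μ ν) + klDiv ν (halfMixture μ ν) - 2 * log 2
  have hJ : -2 * log 2 + 2 * jsd μ ν = J := by
    simp only [J, jsd, halfMixture]
    ring
  have hne : (adversarialValues μ ν).Nonempty :=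
    ⟨_, fun _ => 1 / 2, measurable_const, fun _ => by norm_num, integrable_const _,
      integrable_const _, rfl⟩
  rw [hJ]
  refine csSup_eq_of_forall_le_of_forall_lt_exists_gt hne ?_ fun w hw => ?_
  · rintro r ⟨D, -, hD, hμD, hνD, rfl⟩
    exact integral_log_add_integral_log_one_sub_le_s5 μ ν hD hμD hνD
  obtain ⟨r, hr, hle⟩ := exists_mem_adversarialValues_ge μ ν (t := exp ((w - J) / 4))
    (exp_pos _) (exp_lt_one_iff.2 (by linarith))
  rw [log_exp] at hle
  exact ⟨r, hr, by linarith⟩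

end AdversarialValues

section PushforwardOfAverage

variable {X Z ι : Type*} [MeasurableSpace X] [MeasurableSpace Z] {s : Finset ι}
  {p : ι → Measure X} {F : X → Z} {φ : Z → ℝ}

lemma isProbabilityMeasure_inv_card_smul_sum (hs : s.Nonempty)
    (hp : ∀ i, IsProbabilityMeasure (p i)) :
    IsProbabilityMeasure ((s.card : ℝ≥0∞)⁻¹ • ∑ i ∈ s, p i) :=
  ⟨by simp [Measure.finsetSum_apply, ENNReal.inv_mul_cancel, hs.ne_empty]⟩

lemma integrable_map_smul_sum_iff {c : ℝ≥0∞} (hc₀ : c ≠ 0) (hc : c ≠ ∞) (hF : Measurable F)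
    (hφ : Measurable φ) :
    Integrable φ ((c • ∑ i ∈ s, p i).map F) ↔ ∀ i ∈ s, Integrable (fun x => φ (F x)) (p i) := by
  rw [integrable_map_measure hφ.aestronglyMeasurable hF.aemeasurable,
    integrable_smul_measure hc₀ hc, integrable_finsetSum_measure]
  rfl

lemma integral_map_smul_sum (c : ℝ≥0∞) (hF : Measurable F) (hφ : Measurable φ)
    (hi : ∀ i ∈ s, Integrable (fun x => φ (F x)) (p i)) :
    ∫ z, φ z ∂(c • ∑ i ∈ s, p i).map F = c.toReal * ∑ i ∈ s, ∫ x, φ (F x) ∂(p i) := by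
  rw [integral_map hF.aemeasurable hφ.aestronglyMeasurable, integral_smul_measure,
    integral_finsetSum_measure hi, smul_eq_mul]

end PushforwardOfAverage

/-- Theorem 2 of the paper: with sources `p₁, …, p_M`, target `q`, and feature extractor
`F`, the supremum over measurable discriminators `D : Z → (0,1)` of the multi-source
adversarial objective `(1/M)·Σᵢ ∫ log (D ∘ F) dpᵢ + ∫ log (1 - D ∘ F) dq` equals
`-2·log 2 + 2·JSD(F_* p̄, F_* q)`, where `p̄ = (1/M)(p₁ + ⋯ + p_M)`. -/
theorem multisource_adversarial_sup_eq_jsd {X Z : Type*}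
    [MeasurableSpace X] [MeasurableSpace Z]
    (M : ℕ) (hM : 1 ≤ M) (p : Fin M → Measure X) (q : Measure X)
    (hp : ∀ i, IsProbabilityMeasure (p i)) [IsProbabilityMeasure q]
    (pbar : Measure X) (hpbar : pbar = (M : ℝ≥0∞)⁻¹ • ∑ i, p i)
    (F : X → Z) (hF : Measurable F) :
    sSup {r : ℝ | ∃ D : Z → ℝ, Measurable D ∧ (∀ z, D z ∈ Set.Ioo (0 : ℝ) 1) ∧
        (∀ i, Integrable (fun x => log (D (F x))) (p i)) ∧
        Integrable (fun x => log (1 - D (F x))) q ∧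
        r = (M : ℝ)⁻¹ * (∑ i, ∫ x, log (D (F x)) ∂(p i)) +
              ∫ x, log (1 - D (F x)) ∂q} =
      -2 * log 2 + 2 * jsd (pbar.map F) (q.map F) := by
  have hM₀ : (M : ℝ≥0∞) ≠ 0 := by positivity
  have hc₀ : (M : ℝ≥0∞)⁻¹ ≠ 0 := ENNReal.inv_ne_zero.2 (ENNReal.natCast_ne_top M)
  have hc : (M : ℝ≥0∞)⁻¹ ≠ ∞ := ENNReal.inv_ne_top.2 hM₀
  subst hpbar
  have : IsProbabilityMeasure ((M : ℝ≥0∞)⁻¹ • ∑ i, p i) := by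
    simpa using isProbabilityMeasure_inv_card_smul_sum (Finset.univ_nonempty_iff.2 ⟨⟨0, hM⟩⟩) hp
  have := Measure.isProbabilityMeasure_map (μ := (M : ℝ≥0∞)⁻¹ • ∑ i, p i) hF.aemeasurable
  have := Measure.isProbabilityMeasure_map (μ := q) hF.aemeasurable
  rw [← sSup_adversarialValues, adversarialValues]
  congr 1
  ext r
  refine exists_congr fun D => and_congr_right fun hD => and_congr_right fun _ => ?_
  rw [integrable_map_smul_sum_iff hc₀ hc hF hD.log,
    integrable_map_measure (hD.const_sub 1).log.aestronglyMeasurable hF.aemeasurable]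
  simp only [Finset.mem_univ, true_implies]
  refine and_congr_right fun hi => and_congr_right fun _ => ?_
  rw [integral_map_smul_sum _ hF hD.log fun i _ => hi i,
    integral_map hF.aemeasurable (hD.const_sub 1).log.aestronglyMeasurable]
  simp
end

section
/- Let μ and ν be probability measures on a measurable space X and let F : X → Z be a measurable map into a measurable space Z. Then inf over measurable G : Z → (0, 1) of ( ∫ (−log G(F(x))) dμ(x) + ∫ (−log(1 − G(F(x)))) dν(x) ) = 2·log 2 − 2·JSD(F_* μ, F_* ν), where F_* denotes the pushforward of a measure along F. -/
open MeasureTheory Real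
open scoped ENNReal

/-!
Write `f = dp/d(p + q)`, so that `dq/d(p + q) = 1 - f` almost everywhere. Against `p + q` the
objective of a classifier `G` becomes `∫ f·(-log G) + (1 - f)·(-log (1 - G))`, which dominates
`∫ h(f)` pointwise by Gibbs' inequality, `h` being the binary entropy; and
`2 log 2 - 2 JSD(p, q) = ∫ h(f) d(p + q)` because `d p/d((p + q)/2) = 2 f`. The infimum is in
general not attained, since `f` may take the values `0` and `1`, but the classifiers
`c f + (1 - c)/2` take values in `(0, 1)` and exceed `∫ h(f)` by at most `-2 log c`, which
tends to `0` as `c → 1`. Pushing forward along `F` reduces everything to the case `X = Z`.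
-/

namespace Real

lemma negMulLog_le_mul_neg_log_add_sub {a b : ℝ} (ha : 0 ≤ a) (hb : 0 < b) :
    negMulLog a ≤ a * -log b + (b - a) := by
  rcases ha.eq_or_lt with rfl | ha
  · simpa using hb.le
  · have h := mul_le_mul_of_nonneg_left (self_sub_one_le_mul_log (div_pos ha hb).le) hb.le
    rw [log_div ha.ne' hb.ne'] at h
    field_simp at h
    rw [negMulLog]
    nlinarith

lemma binEntropy_le_mul_neg_log_add_mul_neg_log {a b : ℝ} (ha₀ : 0 ≤ a) (ha₁ : a ≤ 1)
    (hb₀ : 0 < b) (hb₁ : b < 1) :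
    binEntropy a ≤ a * -log b + (1 - a) * -log (1 - b) := by
  have h₁ := negMulLog_le_mul_neg_log_add_sub ha₀ hb₀
  have h₂ := negMulLog_le_mul_neg_log_add_sub (sub_nonneg.2 ha₁) (sub_pos.2 hb₁)
  rw [binEntropy_eq_negMulLog_add_negMulLog_one_sub]
  linarith

lemma mul_neg_log_le_negMulLog_add_of_mul_le {a b c : ℝ} (ha : 0 ≤ a) (hc : 0 < c)
    (hcab : c * a ≤ b) :
    a * -log b ≤ negMulLog a + a * -log c := by
  rcases ha.eq_or_lt with rfl | ha
  · simp
  · have h := log_le_log (mul_pos hc ha) hcab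
    rw [log_mul hc.ne' ha.ne'] at h
    rw [negMulLog]
    nlinarith

end Real

namespace MeasureTheory

variable {Z : Type*} [MeasurableSpace Z]

lemma integrable_negMulLog_comp_of_ae_mem_Icc {m : Measure Z} [IsFiniteMeasure m] {f : Z → ℝ}
    (hf : AEStronglyMeasurable f m) (hf₁ : ∀ᵐ z ∂m, f z ∈ Set.Icc 0 1) :
    Integrable (fun z => negMulLog (f z)) m := by
  refine Integrable.mono' (integrable_const 1)
    (continuous_negMulLog.comp_aestronglyMeasurable hf) ?_
  filter_upwards [hf₁] with z ⟨h₀, h₁⟩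
  rw [Real.norm_of_nonneg (negMulLog_nonneg h₀ h₁)]
  linarith [negMulLog_le_one_sub_self h₀]

lemma integrable_binEntropy_comp_of_ae_mem_Icc {m : Measure Z} [IsFiniteMeasure m] {f : Z → ℝ}
    (hf : AEStronglyMeasurable f m) (hf₁ : ∀ᵐ z ∂m, f z ∈ Set.Icc 0 1) :
    Integrable (fun z => binEntropy (f z)) m := by
  refine Integrable.mono' (integrable_const (log 2))
    (binEntropy_continuous.comp_aestronglyMeasurable hf) ?_
  filter_upwards [hf₁] with z ⟨h₀, h₁⟩
  rw [Real.norm_of_nonneg (binEntropy_nonneg h₀ h₁)]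
  exact binEntropy_le_log_two

lemma integrable_neg_log_comp_of_mem_Icc {μ : Measure Z} [IsFiniteMeasure μ] {H : Z → ℝ}
    (hH : Measurable H) {δ : ℝ} (hδ : 0 < δ) (hH₁ : ∀ z, H z ∈ Set.Icc δ 1) :
    Integrable (fun z => -log (H z)) μ := by
  refine Integrable.mono' (integrable_const (-log δ))
    (measurable_log.comp hH).neg.aestronglyMeasurable (ae_of_all _ fun z => ?_)
  obtain ⟨h₀, h₁⟩ := hH₁ z
  rw [norm_neg, Real.norm_of_nonpos (log_nonpos (hδ.trans_le h₀).le h₁), neg_le_neg_iff]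
  exact log_le_log hδ h₀

lemma klDiv_eq_neg_integral_negMulLog {p m : Measure Z} [SigmaFinite p] [SigmaFinite m]
    (hpm : p ≪ m) :
    klDiv p m = -∫ z, negMulLog (p.rnDeriv m z).toReal ∂m := by
  rw [klDiv, ← integral_toReal_rnDeriv_mul hpm, ← integral_neg]
  simp only [negMulLog, neg_mul, neg_neg]

lemma klDiv_inv_smul {p m : Measure Z} [IsFiniteMeasure p] [SigmaFinite m] (hpm : p ≪ m)
    {c : ℝ≥0∞} (hc₀ : c ≠ 0) (hc : c ≠ ∞)
    (hlog : Integrable (fun z => log (p.rnDeriv m z).toReal) p) :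
    klDiv p (c⁻¹ • m) = p.real Set.univ * log c.toReal + klDiv p m := by
  have hrn : ∀ᵐ z ∂p, p.rnDeriv (c⁻¹ • m) z = c * p.rnDeriv m z := by
    have := Measure.rnDeriv_smul_right_of_ne_top p m (ENNReal.inv_ne_zero.2 hc)
      (ENNReal.inv_ne_top.2 hc₀)
    filter_upwards [hpm.ae_le this] with z hz
    simpa using hz
  have hlog_eq : ∀ᵐ z ∂p,
      log (p.rnDeriv (c⁻¹ • m) z).toReal = log c.toReal + log (p.rnDeriv m z).toReal := by
    filter_upwards [hrn, Measure.rnDeriv_pos hpm, hpm.ae_le (Measure.rnDeriv_ne_top p m)]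
      with z h h₀ htop
    rw [h, ENNReal.toReal_mul,
      log_mul (ENNReal.toReal_pos hc₀ hc).ne' (ENNReal.toReal_pos h₀.ne' htop).ne']
  rw [klDiv, integral_congr_ae hlog_eq, integral_add (integrable_const _) hlog, integral_const,
    smul_eq_mul, klDiv]

lemma integral_neg_log_le_of_mul_le {p m : Measure Z} [IsFiniteMeasure p] [SigmaFinite m]
    (hpm : p ≪ m) {H : Z → ℝ} {c : ℝ} (hc : 0 < c)
    (hH : ∀ᵐ z ∂m, c * (p.rnDeriv m z).toReal ≤ H z)
    (hint : Integrable (fun z => -log (H z)) p)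
    (hent : Integrable (fun z => negMulLog (p.rnDeriv m z).toReal) m) :
    ∫ z, -log (H z) ∂p ≤
      ∫ z, negMulLog (p.rnDeriv m z).toReal ∂m + p.real Set.univ * -log c := by
  rw [← integral_toReal_rnDeriv_mul hpm]
  calc ∫ z, (p.rnDeriv m z).toReal * -log (H z) ∂m
      ≤ ∫ z, negMulLog (p.rnDeriv m z).toReal + (p.rnDeriv m z).toReal * -log c ∂m := by
        refine integral_mono_ae ((integrable_toReal_rnDeriv_mul_iff hpm).2 hint)
          (hent.add (Measure.integrable_toReal_rnDeriv.mul_const _)) ?_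
        filter_upwards [hH] with z hz
        exact mul_neg_log_le_negMulLog_add_of_mul_le ENNReal.toReal_nonneg hc hz
    _ = _ := by
        rw [integral_add hent (Measure.integrable_toReal_rnDeriv.mul_const _), integral_mul_const,
          Measure.integral_toReal_rnDeriv hpm]

variable (p q : Measure Z)

lemma ae_toReal_rnDeriv_add_right_eq_one_sub [SigmaFinite p] [SigmaFinite q] :
    ∀ᵐ z ∂(p + q), (q.rnDeriv (p + q) z).toReal = 1 - (p.rnDeriv (p + q) z).toReal := by
  filter_upwards [Measure.rnDeriv_add' p q (p + q), Measure.rnDeriv_self (p + q)] with z hadd hone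
  rw [hone, Pi.add_apply] at hadd
  have hp : p.rnDeriv (p + q) z ≠ ∞ :=
    ne_top_of_le_ne_top ENNReal.one_ne_top (hadd ▸ le_self_add)
  have hq : q.rnDeriv (p + q) z ≠ ∞ :=
    ne_top_of_le_ne_top ENNReal.one_ne_top (hadd ▸ le_add_self)
  have := congrArg ENNReal.toReal hadd
  rw [ENNReal.toReal_add hp hq, ENNReal.toReal_one] at this
  linarith

lemma ae_toReal_rnDeriv_add_mem_Icc [SigmaFinite p] [SigmaFinite q] :
    ∀ᵐ z ∂(p + q), (p.rnDeriv (p + q) z).toReal ∈ Set.Icc 0 1 := by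
  filter_upwards [ae_toReal_rnDeriv_add_right_eq_one_sub p q] with z h
  have hq : 0 ≤ (q.rnDeriv (p + q) z).toReal := ENNReal.toReal_nonneg
  exact ⟨ENNReal.toReal_nonneg, by linarith⟩

lemma integrable_negMulLog_toReal_rnDeriv_add [IsFiniteMeasure p] [IsFiniteMeasure q] :
    Integrable (fun z => negMulLog (p.rnDeriv (p + q) z).toReal) (p + q) :=
  integrable_negMulLog_comp_of_ae_mem_Icc
    (Measure.measurable_rnDeriv _ _).ennreal_toReal.aestronglyMeasurable
    (ae_toReal_rnDeriv_add_mem_Icc p q)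

lemma integral_binEntropy_toReal_rnDeriv_add [IsFiniteMeasure p] [IsFiniteMeasure q] :
    ∫ z, binEntropy (p.rnDeriv (p + q) z).toReal ∂(p + q) =
      ∫ z, negMulLog (p.rnDeriv (p + q) z).toReal ∂(p + q) +
        ∫ z, negMulLog (q.rnDeriv (p + q) z).toReal ∂(p + q) := by
  have hq := integrable_negMulLog_toReal_rnDeriv_add q p
  rw [add_comm q p] at hq
  rw [← integral_add (integrable_negMulLog_toReal_rnDeriv_add p q) hq]
  refine integral_congr_ae ?_
  filter_upwards [ae_toReal_rnDeriv_add_right_eq_one_sub p q] with z hz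
  rw [hz, binEntropy_eq_negMulLog_add_negMulLog_one_sub]

lemma klDiv_two_inv_smul_add [IsProbabilityMeasure p] [IsFiniteMeasure q] :
    klDiv p ((2 : ℝ≥0∞)⁻¹ • (p + q)) =
      log 2 - ∫ z, negMulLog (p.rnDeriv (p + q) z).toReal ∂(p + q) := by
  have hpm : p ≪ p + q := Measure.AbsolutelyContinuous.rfl.add_right q
  have hint : Integrable (fun z => log (p.rnDeriv (p + q) z).toReal) p := by
    rw [← integrable_toReal_rnDeriv_mul_iff hpm]
    simpa [negMulLog] using (integrable_negMulLog_toReal_rnDeriv_add p q).neg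
  rw [klDiv_inv_smul hpm two_ne_zero ENNReal.ofNat_ne_top hint,
    klDiv_eq_neg_integral_negMulLog hpm, probReal_univ]
  simp [sub_eq_add_neg]

theorem two_mul_log_two_sub_two_mul_jsd [IsProbabilityMeasure p] [IsProbabilityMeasure q] :
    2 * log 2 - 2 * jsd p q = ∫ z, binEntropy (p.rnDeriv (p + q) z).toReal ∂(p + q) := by
  have hq := klDiv_two_inv_smul_add q p
  rw [add_comm q p] at hq
  rw [jsd, klDiv_two_inv_smul_add, hq, integral_binEntropy_toReal_rnDeriv_add]
  ring

def binaryCrossEntropyValues : Set ℝ :=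
  {r | ∃ G : Z → ℝ, Measurable G ∧ (∀ z, G z ∈ Set.Ioo (0 : ℝ) 1) ∧
    Integrable (fun z => -log (G z)) p ∧ Integrable (fun z => -log (1 - G z)) q ∧
    r = (∫ z, -log (G z) ∂p) + ∫ z, -log (1 - G z) ∂q}

lemma integral_binEntropy_le_integral_neg_log_add [IsFiniteMeasure p] [IsFiniteMeasure q]
    {G : Z → ℝ} (hG : ∀ᵐ z ∂(p + q), G z ∈ Set.Ioo 0 1)
    (hp : Integrable (fun z => -log (G z)) p) (hq : Integrable (fun z => -log (1 - G z)) q) :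
    ∫ z, binEntropy (p.rnDeriv (p + q) z).toReal ∂(p + q) ≤
      (∫ z, -log (G z) ∂p) + ∫ z, -log (1 - G z) ∂q := by
  have hpm : p ≪ p + q := Measure.AbsolutelyContinuous.rfl.add_right q
  have hqm : q ≪ p + q := Measure.AbsolutelyContinuous.rfl.add_right' p
  rw [← integral_toReal_rnDeriv_mul hpm, ← integral_toReal_rnDeriv_mul hqm,
    ← integral_add ((integrable_toReal_rnDeriv_mul_iff hpm).2 hp)
      ((integrable_toReal_rnDeriv_mul_iff hqm).2 hq)]
  refine integral_mono_ae ?_ (((integrable_toReal_rnDeriv_mul_iff hpm).2 hp).add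
      ((integrable_toReal_rnDeriv_mul_iff hqm).2 hq)) ?_
  · exact integrable_binEntropy_comp_of_ae_mem_Icc
      (Measure.measurable_rnDeriv _ _).ennreal_toReal.aestronglyMeasurable
      (ae_toReal_rnDeriv_add_mem_Icc p q)
  · filter_upwards [hG, ae_toReal_rnDeriv_add_mem_Icc p q,
      ae_toReal_rnDeriv_add_right_eq_one_sub p q] with z ⟨hG₀, hG₁⟩ ⟨hf₀, hf₁⟩ hg
    rw [hg]
    exact binEntropy_le_mul_neg_log_add_mul_neg_log hf₀ hf₁ hG₀ hG₁

lemma exists_mem_binaryCrossEntropyValues_le [IsProbabilityMeasure p] [IsProbabilityMeasure q]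
    {ε : ℝ} (hε : 0 < ε) :
    ∃ r ∈ binaryCrossEntropyValues p q,
      r ≤ ∫ z, binEntropy (p.rnDeriv (p + q) z).toReal ∂(p + q) + ε := by
  have hpm : p ≪ p + q := Measure.AbsolutelyContinuous.rfl.add_right q
  have hqm : q ≪ p + q := Measure.AbsolutelyContinuous.rfl.add_right' p
  set c := exp (-(ε / 2))
  have hc₀ : 0 < c := exp_pos _
  have hc₁ : c < 1 := exp_lt_one_iff.2 (by linarith)
  set δ := (1 - c) / 2
  have hδ : 0 < δ := by simp only [δ]; linarith
  -- the `min` only matters on a `(p + q)`-null set, where the density may exceed `1`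
  set G : Z → ℝ := fun z => c * min (p.rnDeriv (p + q) z).toReal 1 + δ
  have hGm : Measurable G := by
    have := (Measure.measurable_rnDeriv p (p + q)).ennreal_toReal
    fun_prop
  have hG : ∀ z, G z ∈ Set.Icc δ 1 ∧ 1 - G z ∈ Set.Icc δ 1 := fun z => by
    have h₀ : 0 ≤ min (p.rnDeriv (p + q) z).toReal 1 := le_min ENNReal.toReal_nonneg zero_le_one
    have h₁ : min (p.rnDeriv (p + q) z).toReal 1 ≤ 1 := min_le_right _ _
    simp only [G, Set.mem_Icc, δ]
    refine ⟨⟨?_, ?_⟩, ?_, ?_⟩ <;> nlinarith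
  have hpG := integrable_neg_log_comp_of_mem_Icc (μ := p) hGm hδ fun z => (hG z).1
  have hqG := integrable_neg_log_comp_of_mem_Icc (μ := q) (H := fun z => 1 - G z)
    (measurable_const.sub hGm) hδ fun z => (hG z).2
  refine ⟨_, ⟨G, hGm, fun z => ⟨hδ.trans_le (hG z).1.1, ?_⟩, hpG, hqG, rfl⟩, ?_⟩
  · linarith [(hG z).2.1]
  have hqent := integrable_negMulLog_toReal_rnDeriv_add q p
  rw [add_comm q p] at hqent
  have hpbound := integral_neg_log_le_of_mul_le hpm hc₀ (H := G) ?_ hpG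
    (integrable_negMulLog_toReal_rnDeriv_add p q)
  have hqbound := integral_neg_log_le_of_mul_le hqm hc₀ (H := fun z => 1 - G z) ?_ hqG hqent
  · have hlogc : -log c = ε / 2 := by simp [c]
    rw [integral_binEntropy_toReal_rnDeriv_add]
    simp only [probReal_univ, one_mul, hlogc] at hpbound hqbound
    linarith
  · filter_upwards [ae_toReal_rnDeriv_add_mem_Icc p q,
      ae_toReal_rnDeriv_add_right_eq_one_sub p q] with z ⟨_, hf₁⟩ hg
    simp only [G, min_eq_left hf₁, hg, δ]
    linarith
  · filter_upwards [ae_toReal_rnDeriv_add_mem_Icc p q] with z ⟨_, hf₁⟩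
    simp only [G, min_eq_left hf₁]
    linarith

theorem sInf_binaryCrossEntropyValues [IsProbabilityMeasure p] [IsProbabilityMeasure q] :
    sInf (binaryCrossEntropyValues p q) =
      ∫ z, binEntropy (p.rnDeriv (p + q) z).toReal ∂(p + q) := by
  obtain ⟨r, hr, -⟩ := exists_mem_binaryCrossEntropyValues_le p q one_pos
  refine csInf_eq_of_forall_ge_of_forall_gt_exists_lt ⟨r, hr⟩ ?_ fun w hw => ?_
  · rintro _ ⟨G, -, hG, hp, hq, rfl⟩
    exact integral_binEntropy_le_integral_neg_log_add p q (ae_of_all _ hG) hp hq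
  · obtain ⟨r, hr, hle⟩ := exists_mem_binaryCrossEntropyValues_le p q (half_pos (sub_pos.2 hw))
    exact ⟨r, hr, by linarith⟩

lemma binaryCrossEntropyValues_map {X : Type*} [MeasurableSpace X] (μ ν : Measure X) {F : X → Z}
    (hF : Measurable F) :
    {r : ℝ | ∃ G : Z → ℝ, Measurable G ∧ (∀ z, G z ∈ Set.Ioo (0 : ℝ) 1) ∧
        Integrable (fun x => -log (G (F x))) μ ∧
        Integrable (fun x => -log (1 - G (F x))) ν ∧
        r = (∫ x, -log (G (F x)) ∂μ) + ∫ x, -log (1 - G (F x)) ∂ν} =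
      binaryCrossEntropyValues (μ.map F) (ν.map F) := by
  ext r
  refine exists_congr fun G => and_congr_right fun hG => ?_
  have hp : AEStronglyMeasurable (fun z => -log (G z)) (μ.map F) :=
    (measurable_log.comp hG).neg.aestronglyMeasurable
  have hq : AEStronglyMeasurable (fun z => -log (1 - G z)) (ν.map F) :=
    (measurable_log.comp (measurable_const.sub hG)).neg.aestronglyMeasurable
  rw [integrable_map_measure hp hF.aemeasurable, integrable_map_measure hq hF.aemeasurable,
    integral_map hF.aemeasurable hp, integral_map hF.aemeasurable hq]
  rfl

end MeasureTheory

/-- The infimum over measurable classifiers `G : Z → (0,1)` of the binary cross-entropy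
objective `∫ -log (G ∘ F) dμ + ∫ -log (1 - G ∘ F) dν` equals
`2·log 2 - 2·JSD(F_* μ, F_* ν)`. -/
theorem binary_cross_entropy_inf_eq_jsd {X Z : Type*}
    [MeasurableSpace X] [MeasurableSpace Z]
    (μ ν : Measure X) [IsProbabilityMeasure μ] [IsProbabilityMeasure ν]
    (F : X → Z) (hF : Measurable F) :
    sInf {r : ℝ | ∃ G : Z → ℝ, Measurable G ∧ (∀ z, G z ∈ Set.Ioo (0 : ℝ) 1) ∧
        Integrable (fun x => -log (G (F x))) μ ∧
        Integrable (fun x => -log (1 - G (F x))) ν ∧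
        r = (∫ x, -log (G (F x)) ∂μ) + ∫ x, -log (1 - G (F x)) ∂ν} =
      2 * log 2 - 2 * jsd (μ.map F) (ν.map F) := by
  have := Measure.isProbabilityMeasure_map (μ := μ) hF.aemeasurable
  have := Measure.isProbabilityMeasure_map (μ := ν) hF.aemeasurable
  rw [binaryCrossEntropyValues_map μ ν hF, sInf_binaryCrossEntropyValues,
    two_mul_log_two_sub_two_mul_jsd]
end
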